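/- Let F be a finite-dimensional vector space of real-valued functions on X that contains the constant function 1, with dim(F) = d. Then the class H = { x ↦ indicator(f(x) ≥ 0) : f ∈ F } of threshold classifiers has VC dimension at most d. -/
import Mathlib


/-- A set `S` is shattered by the class `H` of binary classifiers. -/
def Shatters {X : Type*} (H : Set (X → Bool)) (S : Finset X) : Prop :=
  ∀ b : X → Bool, ∃ h ∈ H, ∀ x ∈ S, h x = b x

/-- The VC dimension of a class of binary classifiers, as an extended natural number. -/
noncomputable def vcDim {X : Type*} (H : Set (X → Bool)) : ℕ∞ :=
  sSup {n : ℕ∞ | ∃ S : Finset X, Shatters H S ∧ (S.card : ℕ∞) = n}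

/-- Auxiliary: if there is a dependence relation among the evaluation functionals on `S`
with some positive coefficient, then `S` cannot be shattered by the threshold class. -/
lemma threshold_aux {X : Type*} (F : Submodule ℝ (X → ℝ)) (S : Finset X)
    (hS : Shatters {h | ∃ f ∈ F, h = fun x => decide (0 ≤ f x)} S)
    (c : {x // x ∈ S} → ℝ)
    (hrel : ∀ g : F, ∑ i : {x // x ∈ S}, c i * (g : X → ℝ) i = 0)
    (i0 : {x // x ∈ S}) (hi0 : 0 < c i0) : False := by
  classical
  -- labeling: true exactly where the coefficient is negative
  set b : X → Bool := fun x => decide (∃ hx : x ∈ S, c ⟨x, hx⟩ < 0) with hb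
  obtain ⟨h, hhH, hhb⟩ := hS b
  obtain ⟨f, hfF, rfl⟩ := hhH
  have key : ∀ i : {x // x ∈ S}, (0 ≤ f i ↔ c i < 0) := by
    intro i
    have := hhb i i.2
    simp only [hb, decide_eq_decide] at this
    rw [this]
    constructor
    · rintro ⟨hx, hc⟩; exact hc
    · intro hc; exact ⟨i.2, hc⟩
  have hsum := hrel ⟨f, hfF⟩
  have hle : ∀ i ∈ Finset.univ, c i * f i ≤ (fun _ => (0:ℝ)) i := by
    intro i _
    rcases lt_trichotomy (c i) 0 with h1 | h1 | h1
    · exact mul_nonpos_of_nonpos_of_nonneg h1.le ((key i).2 h1)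
    · simp [h1]
    · have hf : f i < 0 := by
        by_contra hge
        exact absurd ((key i).1 (not_lt.mp hge)) (not_lt.mpr h1.le)
      exact (mul_neg_of_pos_of_neg h1 hf).le
  have hlt : c i0 * f i0 < 0 := by
    have hf : f i0 < 0 := by
      by_contra hge
      exact absurd ((key i0).1 (not_lt.mp hge)) (not_lt.mpr hi0.le)
    exact mul_neg_of_pos_of_neg hi0 hf
  have : (∑ i : {x // x ∈ S}, c i * f i) < ∑ _i : {x // x ∈ S}, (0:ℝ) :=
    Finset.sum_lt_sum hle ⟨i0, Finset.mem_univ i0, hlt⟩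
  rw [hsum, Finset.sum_const, smul_zero] at this
  exact lt_irrefl 0 this

lemma shatters_card_le {X : Type*} (F : Submodule ℝ (X → ℝ))
    [FiniteDimensional ℝ F] (d : ℕ) (hd : Module.finrank ℝ F = d)
    (S : Finset X)
    (hS : Shatters {h | ∃ f ∈ F, h = fun x => decide (0 ≤ f x)} S) :
    S.card ≤ d := by
  classical
  by_contra hcard
  push_neg at hcard
  -- evaluation functionals
  set v : {x // x ∈ S} → Module.Dual ℝ F :=
    fun i => (LinearMap.proj (i : X)).comp F.subtype with hv
  have hnli : ¬ LinearIndependent ℝ v := by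
    intro hli
    have := hli.fintype_card_le_finrank
    rw [Subspace.dual_finrank_eq, hd, Fintype.card_coe] at this
    omega
  obtain ⟨c, hc, j, hj⟩ := Fintype.not_linearIndependent_iff.mp hnli
  have hrel : ∀ g : F, ∑ i : {x // x ∈ S}, c i * (g : X → ℝ) i = 0 := by
    intro g
    have := congrArg (fun φ => φ g) hc
    simpa [hv, LinearMap.sum_apply, LinearMap.smul_apply, smul_eq_mul] using this
  rcases lt_trichotomy (c j) 0 with h1 | h1 | h1
  · exact threshold_aux F S hS (fun i => -(c i))
      (fun g => by
        have := hrel g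
        simpa [neg_mul, Finset.sum_neg_distrib, neg_eq_zero] using this)
      j (by simpa using neg_pos.mpr h1)
  · exact hj h1
  · exact threshold_aux F S hS c hrel j h1

/-- If `F` is a `d`-dimensional vector space of real-valued functions on `X` containing the
constant function `1`, then the threshold class `H = {x ↦ 1[f(x) ≥ 0] : f ∈ F}` has VC
dimension at most `d`. -/
theorem vcdim_threshold_le {X : Type*} (F : Submodule ℝ (X → ℝ))
    [FiniteDimensional ℝ F] (d : ℕ) (hd : Module.finrank ℝ F = d)
    (hone : (fun _ : X => (1 : ℝ)) ∈ F)
    (H : Set (X → Bool))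
    (hH : H = {h | ∃ f ∈ F, h = fun x => decide (0 ≤ f x)}) :
    vcDim H ≤ (d : ℕ∞) := by
  apply sSup_le
  rintro n ⟨S, hS, rfl⟩
  rw [hH] at hS
  exact_mod_cast shatters_card_le F d hd S hS
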